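/- Let U be the algebra of affiliated operators of a finite von Neumann algebra A, M a finitely generated U-module, and K a submodule of M. Then the bnd-closure cl_bnd(K) is a direct summand of M and M/cl_bnd(K) is finitely generated projective; moreover dim_U(K) = dim_U(cl_bnd(K)). -/

import Mathlib

open scoped ENNReal

/-- An abstraction of the pair `A ⊆ U = U(A)`, where `A` is a finite von Neumann algebra
(with a fixed normal faithful trace) and `U` is its algebra of affiliated operators,
together with the trace-induced dimension functions on `A`- and on `U`-modules.
The fields record the facts used in the paper: `U` is the classical ring of quotients
of `A`, `U` is von Neumann regular and self-injective, and the dimensions are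
isomorphism-invariant, additive on short exact sequences, continuous with respect to
suprema over finitely generated projective submodules, and faithful on finitely
generated projective modules. -/
structure AffiliatedOperatorsSetup (A U : Type) [Ring A] [Ring U] where
  /-- the inclusion of `A` into `U` -/
  incl : A →+* U
  incl_injective : Function.Injective incl
  /-- `U` is von Neumann regular -/
  regular : ∀ u : U, ∃ x : U, u * x * u = u
  /-- `U` is self-injective -/
  selfInjective : Module.Injective U U
  /-- every element of `U` is a left fraction `s⁻¹ a` with `a, s ∈ A`, `s` regular:
  `U = Q_cl(A)` -/
  fraction : ∀ u : U, ∃ a s : A,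
      (∀ b : A, s * b = 0 → b = 0) ∧ (∀ b : A, b * s = 0 → b = 0) ∧
      incl s * u = incl a
  /-- regular elements of `A` become invertible in `U` -/
  regularUnit : ∀ s : A, (∀ b : A, s * b = 0 → b = 0) → (∀ b : A, b * s = 0 → b = 0) →
      IsUnit (incl s)
  /-- the trace-induced dimension of an `A`-module -/
  dimA : ∀ (M : Type) [AddCommGroup M] [Module A M], ℝ≥0∞
  /-- the trace-induced dimension of a `U`-module -/
  dimU : ∀ (M : Type) [AddCommGroup M] [Module U M], ℝ≥0∞
  dimA_congr : ∀ (M N : Type) [AddCommGroup M] [Module A M] [AddCommGroup N] [Module A N],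
      (M ≃ₗ[A] N) → dimA M = dimA N
  dimU_congr : ∀ (M N : Type) [AddCommGroup M] [Module U M] [AddCommGroup N] [Module U N],
      (M ≃ₗ[U] N) → dimU M = dimU N
  dimA_add : ∀ (M : Type) [AddCommGroup M] [Module A M] (N : Submodule A M),
      dimA M = dimA ↥N + dimA (M ⧸ N)
  dimU_add : ∀ (M : Type) [AddCommGroup M] [Module U M] (N : Submodule U M),
      dimU M = dimU ↥N + dimU (M ⧸ N)
  dimA_sup : ∀ (M : Type) [AddCommGroup M] [Module A M],
      dimA M = ⨆ (N : Submodule A M) (_ : N.FG ∧ Module.Projective A ↥N), dimA ↥N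
  dimU_sup : ∀ (M : Type) [AddCommGroup M] [Module U M],
      dimU M = ⨆ (N : Submodule U M) (_ : N.FG ∧ Module.Projective U ↥N), dimU ↥N
  dimA_faithful : ∀ (M : Type) [AddCommGroup M] [Module A M],
      Module.Finite A M → Module.Projective A M → (dimA M = 0 ↔ Subsingleton M)
  dimU_faithful : ∀ (M : Type) [AddCommGroup M] [Module U M],
      Module.Finite U M → Module.Projective U M → (dimU M = 0 ↔ Subsingleton M)

/-- The closure `cl_bnd(K)` of a submodule `K` of `M` in the torsion theory cogenerated by
the ring `U`: `{x ∈ M | f x = 0 for all f ∈ Hom_U(M,U) with K ⊆ ker f}`. -/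
def bndClosure (U : Type) [Ring U] {M : Type} [AddCommGroup M] [Module U M]
    (K : Submodule U M) : Submodule U M :=
  sInf {N : Submodule U M | ∃ f : M →ₗ[U] U, K ≤ LinearMap.ker f ∧ N = LinearMap.ker f}


/-!
Write `N = cl_bnd(K)`. Functionals `M → U` separate the points of `M/N`, so in a presentation
`Uⁿ → M/N` the kernel `L` is an intersection of kernels of functionals on `Uⁿ`. Over a von
Neumann regular self-injective ring such a submodule `L` of an injective module `E` is a direct
summand: for `C` maximal with `L ∩ C = 0`, the image of `L` in `E/C` is essential, the inclusion
`L → E` extends to `ψ : E/C → E` by injectivity, and since a regular ring has no nonzero elements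
with essential left annihilator, every functional vanishing on `L` vanishes on the range of `ψ`.
Thus `ψ` takes values in `L` and `E → E/C → L` is a projection onto `L`. Hence `M/N` is
projective and `N` is a summand of `M`.

For the dimension, every functional on `M/K` vanishes on `N/K`, and by self-injectivity every
functional on a submodule of `N/K` extends to `M/K`. So `N/K` contains no nonzero finitely
generated projective submodule, and its dimension is `0`.
-/

open Module LinearMap

theorem eq_zero_of_forall_exists_mul_ne_zero_mul_eq_zero {R : Type*} [Ring R]
    (reg : ∀ u : R, ∃ x : R, u * x * u = u) {y : R}
    (h : ∀ v : R, v ≠ 0 → ∃ u : R, u * v ≠ 0 ∧ u * v * y = 0) : y = 0 := by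
  obtain ⟨z, hz⟩ := reg y
  by_contra hy
  have hyz : y * z ≠ 0 := fun h0 => hy (by rw [← hz, h0, zero_mul])
  obtain ⟨u, hu, huy⟩ := h (y * z) hyz
  apply hu
  calc u * (y * z) = u * (y * z * y) * z := by rw [hz, mul_assoc]
    _ = u * (y * z) * y * z := by simp only [mul_assoc]
    _ = 0 := by rw [huy, zero_mul]

theorem exists_maximal_disjoint {α : Type*} [CompleteLattice α] [IsCompactlyGenerated α]
    (a : α) : ∃ b, Maximal (Disjoint a) b := by
  refine zorn_le₀ {b | Disjoint a b} fun c hc hchain => ⟨sSup c, ?_, fun _ => le_sSup⟩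
  exact hchain.directedOn.disjoint_sSup_right.mpr hc

namespace Submodule

variable {R E : Type*} [Ring R] [AddCommGroup E] [Module R E]

theorem exists_mkQ_eq_smul_of_maximal_disjoint {L C : Submodule R E}
    (hC : Maximal (Disjoint L) C) {z : E ⧸ C} (hz : z ≠ 0) :
    ∃ u : R, ∃ l ∈ L, l ≠ 0 ∧ C.mkQ l = u • z := by
  obtain ⟨x, rfl⟩ := C.mkQ_surjective z
  have hx : x ∉ C := fun h => hz ((Quotient.mk_eq_zero C).mpr h)
  have hmeet : ¬ Disjoint L (C ⊔ span R {x}) := fun hd =>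
    hx (hC.2 hd le_sup_left (mem_sup_right (mem_span_singleton_self x)))
  obtain ⟨l, hlL, hlCx, hl⟩ : ∃ l ∈ L, l ∈ C ⊔ span R {x} ∧ l ≠ 0 := by
    simpa [disjoint_def] using hmeet
  obtain ⟨c, hc, _, hy, rfl⟩ := mem_sup.mp hlCx
  obtain ⟨u, rfl⟩ := mem_span_singleton.mp hy
  refine ⟨u, _, hlL, hl, ?_⟩
  rw [map_add, map_smul, mkQ_apply, (Quotient.mk_eq_zero C).mpr hc, zero_add]

theorem exists_apply_mkQ_eq_self_of_disjoint [Module.Injective R E] {L C : Submodule R E}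
    (h : Disjoint L C) :
    ∃ ψ : E ⧸ C →ₗ[R] E, ∀ l ∈ L, ψ (C.mkQ l) = l := by
  have hinj : Function.Injective (C.mkQ ∘ₗ L.subtype) := by
    rw [← ker_eq_bot, ker_comp, ker_mkQ, ← disjoint_iff_comap_eq_bot]
    exact h
  obtain ⟨ψ, hψ⟩ := Module.Injective.out _ hinj L.subtype
  exact ⟨ψ, fun l hl => hψ ⟨l, hl⟩⟩

theorem apply_mem_of_maximal_disjoint (reg : ∀ u : R, ∃ x : R, u * x * u = u)
    {L C : Submodule R E} (hL : ∀ x ∉ L, ∃ g : Dual R E, L ≤ ker g ∧ g x ≠ 0)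
    (hC : Maximal (Disjoint L) C) {ψ : E ⧸ C →ₗ[R] E} (hψ : ∀ l ∈ L, ψ (C.mkQ l) = l)
    (z : E ⧸ C) : ψ z ∈ L := by
  by_contra hz
  obtain ⟨g, hgL, hgz⟩ := hL _ hz
  refine hgz (eq_zero_of_forall_exists_mul_ne_zero_mul_eq_zero reg fun v hv => ?_)
  by_cases hvz : v • z = 0
  · refine ⟨1, by rwa [one_mul], ?_⟩
    rw [one_mul, ← smul_eq_mul, ← map_smul, ← map_smul, hvz, map_zero, map_zero]
  · obtain ⟨u, l, hlL, hl, hlz⟩ := exists_mkQ_eq_smul_of_maximal_disjoint hC hvz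
    have hψl : (u * v) • ψ z = l := by rw [mul_smul, ← map_smul, ← map_smul, ← hlz, hψ l hlL]
    refine ⟨u, fun huv => hl ?_, ?_⟩
    · rw [← hψl, huv, zero_smul]
    · rw [← smul_eq_mul, ← map_smul, hψl]
      exact hgL hlL

theorem exists_isCompl_of_forall_notMem_exists_dual (reg : ∀ u : R, ∃ x : R, u * x * u = u)
    [Module.Injective R E] {L : Submodule R E}
    (hL : ∀ x ∉ L, ∃ g : Dual R E, L ≤ ker g ∧ g x ≠ 0) : ∃ C, IsCompl L C := by
  obtain ⟨C, hC⟩ := exists_maximal_disjoint L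
  obtain ⟨ψ, hψ⟩ := exists_apply_mkQ_eq_self_of_disjoint hC.1
  let p : E →ₗ[R] L :=
    (ψ ∘ₗ C.mkQ).codRestrict L fun x => apply_mem_of_maximal_disjoint reg hL hC hψ _
  exact ⟨_, isCompl_of_proj (f := p) fun l => Subtype.ext (hψ l l.2)⟩

theorem projective_quotient_of_isCompl [Module.Projective R E] {L C : Submodule R E}
    (h : IsCompl L C) : Module.Projective R (E ⧸ L) :=
  have : Module.Projective R C := .of_split C.subtype (C.projectionOnto L h.symm)
    (LinearMap.ext fun x => projectionOnto_apply_left h.symm x)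
  .of_equiv' (L.quotientEquivOfIsCompl C h).symm

theorem exists_isCompl_of_projective_quotient (N : Submodule R E)
    [Module.Projective R (E ⧸ N)] : ∃ C, IsCompl N C := by
  obtain ⟨σ, hσ⟩ := projective_lifting_property N.mkQ LinearMap.id N.mkQ_surjective
  have hσx : ∀ x, x - σ (N.mkQ x) ∈ N := fun x => by
    rw [← Quotient.mk_eq_zero, ← mkQ_apply, map_sub, ← LinearMap.comp_apply, hσ, id_apply,
      sub_self]
  let p : E →ₗ[R] N := (LinearMap.id - σ ∘ₗ N.mkQ).codRestrict N hσx
  refine ⟨_, isCompl_of_proj (f := p) fun x => Subtype.ext ?_⟩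
  simp [p, (Quotient.mk_eq_zero N).mpr x.2]

end Submodule

theorem Module.Projective.of_finite_of_exists_dual_ne_zero {R P : Type*} [Ring R]
    (reg : ∀ u : R, ∃ x : R, u * x * u = u) [Module.Injective R R]
    [AddCommGroup P] [Module R P] [Module.Finite R P]
    (hP : ∀ y : P, y ≠ 0 → ∃ f : Dual R P, f y ≠ 0) : Module.Projective R P := by
  obtain ⟨n, π, hπ⟩ := Module.Finite.exists_fin' R P
  obtain ⟨C, hC⟩ := Submodule.exists_isCompl_of_forall_notMem_exists_dual reg
    (L := ker π) fun x hx => by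
      obtain ⟨f, hf⟩ := hP (π x) hx
      exact ⟨f ∘ₗ π, fun y hy => by simp [mem_ker.mp hy], hf⟩
  have := Submodule.projective_quotient_of_isCompl hC
  exact .of_equiv' (π.quotKerEquivOfSurjective hπ)

section bndClosure

variable {U M : Type} [Ring U] [AddCommGroup M] [Module U M]

theorem mem_bndClosure {K : Submodule U M} {x : M} :
    x ∈ bndClosure U K ↔ ∀ f : Dual U M, K ≤ ker f → f x = 0 := by
  simp only [bndClosure, Submodule.mem_sInf]
  exact ⟨fun h f hf => h _ ⟨f, hf, rfl⟩, by rintro h _ ⟨f, hf, rfl⟩; exact h f hf⟩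

theorem le_bndClosure (K : Submodule U M) : K ≤ bndClosure U K :=
  fun _ hx => mem_bndClosure.mpr fun _ hf => hf hx

theorem bndClosure_le_ker {K : Submodule U M} {f : Dual U M} (hf : K ≤ ker f) :
    bndClosure U K ≤ ker f :=
  fun _ hx => mem_bndClosure.mp hx f hf

theorem exists_dual_ne_zero_of_ne_zero_quotient_bndClosure (K : Submodule U M)
    {y : M ⧸ bndClosure U K} (hy : y ≠ 0) : ∃ f : Dual U (M ⧸ bndClosure U K), f y ≠ 0 := by
  obtain ⟨x, rfl⟩ := Submodule.mkQ_surjective _ y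
  have hx : x ∉ bndClosure U K := fun hx => hy ((Submodule.Quotient.mk_eq_zero _).mpr hx)
  obtain ⟨f, hKf, hfx⟩ : ∃ f : Dual U M, K ≤ ker f ∧ f x ≠ 0 := by
    simpa [mem_bndClosure] using hx
  exact ⟨(bndClosure U K).liftQ f (bndClosure_le_ker hKf), hfx⟩

end bndClosure

theorem Module.Projective.subsingleton_of_forall_comp_eq_zero {R X P : Type*} [Ring R]
    [Module.Injective R R] [AddCommGroup X] [Module R X] [Module.Projective R X]
    [AddCommGroup P] [Module R P] {ι : X →ₗ[R] P} (hι : Function.Injective ι)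
    (h : ∀ f : Dual R P, f ∘ₗ ι = 0) : Subsingleton X := by
  refine ⟨fun a b => sub_eq_zero.mp ((forall_dual_apply_eq_zero_iff R _).mp fun g => ?_)⟩
  obtain ⟨f, hf⟩ := Module.Injective.extension_property R R X P ι hι g
  rw [← hf, h f, LinearMap.zero_apply]

namespace AffiliatedOperatorsSetup

variable {A U : Type} [Ring A] [Ring U] (S : AffiliatedOperatorsSetup A U)

theorem dimU_eq_dimU_ker_add_dimU_range {X Y : Type} [AddCommGroup X] [Module U X]
    [AddCommGroup Y] [Module U Y] (φ : X →ₗ[U] Y) :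
    S.dimU X = S.dimU (ker φ) + S.dimU (range φ) := by
  rw [S.dimU_add X (ker φ), S.dimU_congr _ _ φ.quotKerEquivRange]

theorem dimU_eq_zero_of_forall_fg_projective {X : Type} [AddCommGroup X] [Module U X]
    (h : ∀ Q : Submodule U X, Q.FG → Module.Projective U Q → Subsingleton Q) :
    S.dimU X = 0 := by
  rw [S.dimU_sup X]
  refine ENNReal.iSup_eq_zero.mpr fun Q => ENNReal.iSup_eq_zero.mpr fun ⟨hfg, hproj⟩ => ?_
  have : Module.Finite U Q := Module.Finite.iff_fg.mpr hfg
  exact (S.dimU_faithful Q this hproj).mpr (h Q hfg hproj)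

theorem dimU_eq_zero_of_forall_le_ker {X : Type} [AddCommGroup X] [Module U X]
    (T : Submodule U X) (hT : ∀ f : Dual U X, T ≤ ker f) : S.dimU T = 0 := by
  have := S.selfInjective
  refine S.dimU_eq_zero_of_forall_fg_projective fun Q _ _ =>
    Module.Projective.subsingleton_of_forall_comp_eq_zero (ι := T.subtype ∘ₗ Q.subtype)
      (T.injective_subtype.comp Q.injective_subtype) fun f => ?_
  ext q
  exact hT f (q : T).2

theorem dimU_eq_of_le_of_forall_le_ker {M : Type} [AddCommGroup M] [Module U M]
    {K N : Submodule U M} (hKN : K ≤ N) (h : ∀ f : Dual U M, K ≤ ker f → N ≤ ker f) :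
    S.dimU K = S.dimU N := by
  let φ := K.mkQ ∘ₗ N.subtype
  have hker : ker φ = K.comap N.subtype := by rw [ker_comp, Submodule.ker_mkQ]
  have hrange : S.dimU (range φ) = 0 := S.dimU_eq_zero_of_forall_le_ker _ fun f => by
    rintro _ ⟨x, rfl⟩
    exact h (f ∘ₗ K.mkQ) (fun k hk => by simp [(Submodule.Quotient.mk_eq_zero K).mpr hk]) x.2
  rw [S.dimU_eq_dimU_ker_add_dimU_range φ, hrange, add_zero, hker,
    S.dimU_congr _ _ (Submodule.comapSubtypeEquivOfLe hKN)]

end AffiliatedOperatorsSetup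

/-- let `U` be the algebra of affiliated operators of a finite von Neumann
algebra `A`, `M` a finitely generated `U`-module, and `K` a submodule of `M`. Then the
bnd-closure `cl_bnd(K)` is a direct summand of `M` and `M/cl_bnd(K)` is finitely
generated projective; moreover `dim_U(K) = dim_U(cl_bnd(K))`. -/
theorem bndClosure_direct_summand_and_dim (A U : Type) [Ring A] [Ring U]
    (S : AffiliatedOperatorsSetup A U)
    (M : Type) [AddCommGroup M] [Module U M] [Module.Finite U M] (K : Submodule U M) :
    (∃ q : Submodule U M, IsCompl (bndClosure U K) q) ∧
      Module.Finite U (M ⧸ bndClosure U K) ∧ Module.Projective U (M ⧸ bndClosure U K) ∧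
      S.dimU ↥K = S.dimU ↥(bndClosure U K) := by
  have := S.selfInjective
  have hproj : Module.Projective U (M ⧸ bndClosure U K) :=
    .of_finite_of_exists_dual_ne_zero S.regular
      fun _ => exists_dual_ne_zero_of_ne_zero_quotient_bndClosure K
  exact ⟨(bndClosure U K).exists_isCompl_of_projective_quotient, inferInstance, hproj,
    S.dimU_eq_of_le_of_forall_le_ker (le_bndClosure K) fun _ => bndClosure_le_ker⟩
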